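/- arXiv:2309.04994 — 3 statements merged into one kernel-verified Lean document; each statement's English description precedes it below -/
import Mathlib

section
/- If X is a Hilbert space and W ⊂ X is a centrally symmetric compact set, then the linear n-width equals the Kolmogorov n-width: λ_n(W,X) = d_n(W,X). -/
/-! In a Hilbert space the orthogonal projection onto a subspace `L` realises the distance of
every point to `L`, so each Kolmogorov competitor `L` is matched by a linear competitor of the
same rank with the same error. Conversely, the range of any finite-rank operator `A` is a
Kolmogorov competitor whose error at `f` is at most `‖f - A f‖`; this half needs `W` bounded,
since an unbounded `⨆` in `ℝ` is `0`. -/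

noncomputable def kolWidth {X : Type*} [NormedAddCommGroup X] [NormedSpace ℝ X]
    (W : Set X) (n : ℕ) : ℝ :=
  ⨅ L : {L : Submodule ℝ X // FiniteDimensional ℝ L ∧ Module.finrank ℝ L ≤ n},
    ⨆ f : W, ⨅ g : L.1, ‖(f : X) - (g : X)‖

noncomputable def linWidth {X : Type*} [NormedAddCommGroup X] [NormedSpace ℝ X]
    (W : Set X) (n : ℕ) : ℝ :=
  ⨅ A : {A : X →L[ℝ] X //
      FiniteDimensional ℝ (LinearMap.range (A : X →ₗ[ℝ] X)) ∧
      Module.finrank ℝ (LinearMap.range (A : X →ₗ[ℝ] X)) ≤ n},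
    ⨆ f : W, ‖(f : X) - A.1 f‖

section Widths

variable {X : Type*} [NormedAddCommGroup X] [NormedSpace ℝ X] {W : Set X} {n : ℕ}

lemma kolWidth_le (L : Submodule ℝ X) (hfin : FiniteDimensional ℝ L)
    (hL : Module.finrank ℝ L ≤ n) :
    kolWidth W n ≤ ⨆ f : W, ⨅ g : L, ‖(f : X) - (g : X)‖ :=
  ciInf_le (f := fun L : {L : Submodule ℝ X // FiniteDimensional ℝ L ∧ Module.finrank ℝ L ≤ n} =>
      ⨆ f : W, ⨅ g : L.1, ‖(f : X) - (g : X)‖)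
    ⟨0, Set.forall_mem_range.2 fun _ => Real.iSup_nonneg fun _ =>
      Real.iInf_nonneg fun _ => norm_nonneg _⟩ ⟨L, hfin, hL⟩

lemma linWidth_le (A : X →L[ℝ] X)
    (hfin : FiniteDimensional ℝ (LinearMap.range (A : X →ₗ[ℝ] X)))
    (hA : Module.finrank ℝ (LinearMap.range (A : X →ₗ[ℝ] X)) ≤ n) :
    linWidth W n ≤ ⨆ f : W, ‖(f : X) - A f‖ :=
  ciInf_le (f := fun A : {A : X →L[ℝ] X //
      FiniteDimensional ℝ (LinearMap.range (A : X →ₗ[ℝ] X)) ∧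
      Module.finrank ℝ (LinearMap.range (A : X →ₗ[ℝ] X)) ≤ n} => ⨆ f : W, ‖(f : X) - A.1 f‖)
    ⟨0, Set.forall_mem_range.2 fun _ => Real.iSup_nonneg fun _ => norm_nonneg _⟩
    ⟨A, hfin, hA⟩

lemma le_kolWidth {c : ℝ}
    (h : ∀ L : Submodule ℝ X, FiniteDimensional ℝ L → Module.finrank ℝ L ≤ n →
      c ≤ ⨆ f : W, ⨅ g : L, ‖(f : X) - (g : X)‖) :
    c ≤ kolWidth W n :=
  have : Nonempty {L : Submodule ℝ X // FiniteDimensional ℝ L ∧ Module.finrank ℝ L ≤ n} :=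
    ⟨⟨⊥, inferInstance, by simp⟩⟩
  le_ciInf fun L => h L.1 L.2.1 L.2.2

lemma le_linWidth {c : ℝ}
    (h : ∀ A : X →L[ℝ] X, FiniteDimensional ℝ (LinearMap.range (A : X →ₗ[ℝ] X)) →
      Module.finrank ℝ (LinearMap.range (A : X →ₗ[ℝ] X)) ≤ n → c ≤ ⨆ f : W, ‖(f : X) - A f‖) :
    c ≤ linWidth W n :=
  have : Nonempty {A : X →L[ℝ] X // FiniteDimensional ℝ (LinearMap.range (A : X →ₗ[ℝ] X)) ∧
      Module.finrank ℝ (LinearMap.range (A : X →ₗ[ℝ] X)) ≤ n} :=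
    ⟨⟨0, by
      rw [ContinuousLinearMap.toLinearMap_zero, LinearMap.range_zero]
      exact ⟨inferInstance, by simp⟩⟩⟩
  le_ciInf fun A => h A.1 A.2.1 A.2.2

lemma bddAbove_range_norm_sub_apply (hW : Bornology.IsBounded W) (A : X →L[ℝ] X) :
    BddAbove (Set.range fun f : W => ‖(f : X) - A f‖) := by
  obtain ⟨C, hC⟩ := hW.exists_norm_le
  refine ⟨‖1 - A‖ * C, Set.forall_mem_range.2 fun f => ?_⟩
  calc ‖(f : X) - A f‖ = ‖(1 - A) f‖ := rfl
    _ ≤ ‖1 - A‖ * ‖(f : X)‖ := (1 - A).le_opNorm f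
    _ ≤ ‖1 - A‖ * C := by gcongr; exact hC f f.2

lemma kolWidth_le_linWidth (hW : Bornology.IsBounded W) : kolWidth W n ≤ linWidth W n := by
  refine le_linWidth fun A _ hA => (kolWidth_le _ ‹_› hA).trans ?_
  rcases isEmpty_or_nonempty W with _ | _
  · simp
  refine ciSup_mono (bddAbove_range_norm_sub_apply hW A) fun f => ?_
  exact ciInf_le ⟨0, Set.forall_mem_range.2 fun _ => norm_nonneg _⟩
    (⟨A f, LinearMap.mem_range_self _ _⟩ : LinearMap.range (A : X →ₗ[ℝ] X))

end Widths

lemma linWidth_le_kolWidth {X : Type*} [NormedAddCommGroup X] [InnerProductSpace ℝ X]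
    (W : Set X) (n : ℕ) : linWidth W n ≤ kolWidth W n := by
  refine le_kolWidth fun L _ hL => ?_
  have hrange : LinearMap.range (L.starProjection : X →ₗ[ℝ] X) = L := L.range_starProjection
  calc linWidth W n ≤ ⨆ f : W, ‖(f : X) - L.starProjection f‖ :=
        linWidth_le _ (by rwa [hrange]) (by rwa [hrange])
    _ = ⨆ f : W, ⨅ g : L, ‖(f : X) - (g : X)‖ :=
        iSup_congr fun f => Submodule.starProjection_minimal (f : X)

theorem linWidth_eq_kolWidth_of_hilbert_general {X : Type*} [NormedAddCommGroup X]
    [InnerProductSpace ℝ X]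
    (W : Set X) (hW : IsCompact W) (n : ℕ) :
    linWidth W n = kolWidth W n :=
  (linWidth_le_kolWidth W n).antisymm (kolWidth_le_linWidth hW.isBounded)

/-- if `X` is a Hilbert space and `W ⊆ X` is a centrally symmetric
compact set, then the linear `n`-width equals the Kolmogorov `n`-width. -/
theorem linWidth_eq_kolWidth_of_hilbert {X : Type*} [NormedAddCommGroup X]
    [InnerProductSpace ℝ X] [CompleteSpace X]
    (W : Set X) (hW : IsCompact W) (hsym : ∀ f ∈ W, -f ∈ W) (n : ℕ) :
    linWidth W n = kolWidth W n :=
  linWidth_eq_kolWidth_of_hilbert_general W hW n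
end

section
/- For ξ ≥ 1 and d ≥ 1, the cardinality of the index set G(ξ) associated with the Smolyak quadrature satisfies |G(ξ)| ≍ Σ_{k ∈ ℕ₀^d, |k|₁ ≤ ξ} 2^{|k|₁} ≍ 2^ξ ξ^{d−1}, i.e., there exist constants c, C > 0 depending only on d such that c·2^ξ ξ^{d−1} ≤ Σ_{|k|₁ ≤ ξ} 2^{|k|₁} ≤ C·2^ξ ξ^{d−1}. -/
/-!
Grouping the multi-indices by their level `m = |k|₁` turns the sum into
`∑_{m ≤ ⌊ξ⌋} C(m + d - 1, d - 1) 2^m` (stars and bars). Since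
`(m + 1)^(d-1) / (d-1)! ≤ C(m + d - 1, d - 1) ≤ (m + 1)^(d-1)`, the top level alone gives
the lower bound and a geometric series the upper one; finally `ξ < ⌊ξ⌋ + 1 ≤ 2ξ`
for `ξ ≥ 1`.
-/

open Finset

theorem Finset.Nat.card_antidiagonalTuple (k n : ℕ) :
    #(Nat.antidiagonalTuple k n) = (k + n - 1).choose n := by
  classical
  simpa [finsuppAntidiag, piAntidiag_univ_fin_eq_antidiagonalTuple] using
    card_finsuppAntidiag_nat_eq_choose (s := (univ : Finset (Fin k))) n

theorem Finset.Nat.card_antidiagonalTuple_succ (e n : ℕ) :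
    #(Nat.antidiagonalTuple (e + 1) n) = (n + e).choose e := by
  rw [card_antidiagonalTuple, show e + 1 + n - 1 = n + e by omega, Nat.choose_symm_add]

theorem Finset.Nat.card_antidiagonalTuple_succ_le (e n : ℕ) :
    #(Nat.antidiagonalTuple (e + 1) n) ≤ (n + 1) ^ e := by
  rw [card_antidiagonalTuple_succ]
  exact Nat.choose_add_le_add_one_pow n e

theorem Finset.Nat.pow_div_factorial_le_card_antidiagonalTuple_succ (e n : ℕ) :
    ((n + 1 : ℝ) ^ e) / e.factorial ≤ #(Nat.antidiagonalTuple (e + 1) n) := by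
  have h := Nat.pow_le_choose (α := ℝ) e (n + e)
  rw [show n + e + 1 - e = n + 1 by omega, ← card_antidiagonalTuple_succ] at h
  exact_mod_cast h

theorem tsum_subtype_sum_le_eq_sum_range {M : Type*} [AddCommMonoid M] [TopologicalSpace M]
    (d : ℕ) {ξ : ℝ} (hξ : 0 ≤ ξ) (f : ℕ → M) :
    ∑' k : {k : Fin d → ℕ // ∑ i, (k i : ℝ) ≤ ξ}, f (∑ i, k.1 i) =
      ∑ m ∈ range (⌊ξ⌋₊ + 1), #(Nat.antidiagonalTuple d m) • f m := by
  have hset : {k : Fin d → ℕ | ∑ i, (k i : ℝ) ≤ ξ} =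
      ↑((range (⌊ξ⌋₊ + 1)).biUnion (Nat.antidiagonalTuple d)) := by
    ext k
    simp [Nat.mem_antidiagonalTuple, Nat.le_floor_iff hξ]
  have hdisj : (range (⌊ξ⌋₊ + 1) : Set ℕ).PairwiseDisjoint (Nat.antidiagonalTuple d) :=
    fun m _ m' _ hmm' => disjoint_left.2 fun k hm hm' =>
      hmm' ((Nat.mem_antidiagonalTuple.1 hm).symm.trans (Nat.mem_antidiagonalTuple.1 hm'))
  change ∑' k : ({k : Fin d → ℕ | ∑ i, (k i : ℝ) ≤ ξ} : Set _), f (∑ i, k.1 i) = _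
  rw [hset, Finset.tsum_subtype' _ fun k : Fin d → ℕ => f (∑ i, k i), sum_biUnion hdisj]
  refine sum_congr rfl fun m _ => ?_
  rw [sum_congr rfl fun k hk => congrArg f (Nat.mem_antidiagonalTuple.1 hk), sum_const]

theorem sum_range_card_antidiagonalTuple_nsmul_two_pow_le (e n : ℕ) :
    ∑ m ∈ range (n + 1), #(Nat.antidiagonalTuple (e + 1) m) • (2 : ℝ) ^ m ≤
      (n + 1) ^ e * 2 ^ (n + 1) := by
  have hlevel (m) (hm : m ∈ range (n + 1)) :
      #(Nat.antidiagonalTuple (e + 1) m) • (2 : ℝ) ^ m ≤ (n + 1) ^ e * 2 ^ m := by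
    rw [nsmul_eq_mul]
    gcongr
    exact_mod_cast (Nat.card_antidiagonalTuple_succ_le e m).trans
      (Nat.pow_le_pow_left (by simpa using hm) e)
  have hgeom : ∑ m ∈ range (n + 1), (2 : ℝ) ^ m ≤ 2 ^ (n + 1) := by
    rw [geom_sum_eq (by norm_num : (2 : ℝ) ≠ 1)]
    norm_num
  calc _ ≤ ∑ m ∈ range (n + 1), (n + 1 : ℝ) ^ e * 2 ^ m := sum_le_sum hlevel
    _ = (n + 1) ^ e * ∑ m ∈ range (n + 1), (2 : ℝ) ^ m := (mul_sum ..).symm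
    _ ≤ (n + 1) ^ e * 2 ^ (n + 1) := by gcongr

theorem pow_div_factorial_mul_two_pow_le_sum_range (e n : ℕ) :
    (n + 1 : ℝ) ^ e / e.factorial * 2 ^ n ≤
      ∑ m ∈ range (n + 1), #(Nat.antidiagonalTuple (e + 1) m) • (2 : ℝ) ^ m := by
  calc _ ≤ #(Nat.antidiagonalTuple (e + 1) n) • (2 : ℝ) ^ n := by
        rw [nsmul_eq_mul]
        gcongr
        exact Nat.pow_div_factorial_le_card_antidiagonalTuple_succ e n
    _ ≤ _ := single_le_sum (f := fun m => #(Nat.antidiagonalTuple (e + 1) m) • (2 : ℝ) ^ m)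
        (fun m _ => nsmul_nonneg (by positivity) _) (self_mem_range_succ n)

/-- for `ξ ≥ 1` and `d ≥ 1`, the number (up to constants) of nodes of
the step-hyperbolic-cross grid, `∑_{k ∈ ℕ₀^d, |k|₁ ≤ ξ} 2^{|k|₁}`, satisfies
`c · 2^ξ ξ^{d-1} ≤ ∑_{|k|₁ ≤ ξ} 2^{|k|₁} ≤ C · 2^ξ ξ^{d-1}` with `c, C > 0`
depending only on `d`. -/
theorem hyperbolic_cross_cardinality (d : ℕ) (hd : 1 ≤ d) :
    ∃ c C : ℝ, 0 < c ∧ 0 < C ∧ ∀ ξ : ℝ, 1 ≤ ξ →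
      c * (2 : ℝ) ^ ξ * ξ ^ (d - 1) ≤
        (∑' k : {k : Fin d → ℕ // (∑ i, (k i : ℝ)) ≤ ξ}, (2 : ℝ) ^ (∑ i, k.1 i)) ∧
      (∑' k : {k : Fin d → ℕ // (∑ i, (k i : ℝ)) ≤ ξ}, (2 : ℝ) ^ (∑ i, k.1 i)) ≤
        C * (2 : ℝ) ^ ξ * ξ ^ (d - 1) := by
  obtain ⟨e, rfl⟩ := Nat.exists_eq_add_of_le' hd
  refine ⟨(2 * e.factorial)⁻¹, 2 ^ (e + 1), by positivity, by positivity, fun ξ hξ => ?_⟩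
  have hξ0 : 0 ≤ ξ := zero_le_one.trans hξ
  rw [tsum_subtype_sum_le_eq_sum_range _ hξ0, Nat.add_sub_cancel]
  set n := ⌊ξ⌋₊
  have hnξ : (n : ℝ) ≤ ξ := Nat.floor_le hξ0
  have hξn : ξ < n + 1 := Nat.lt_floor_add_one ξ
  have h2n : (2 : ℝ) ^ n ≤ 2 ^ ξ := by
    rw [← Real.rpow_natCast]; exact Real.rpow_le_rpow_of_exponent_le one_le_two hnξ
  have h2ξ : (2 : ℝ) ^ ξ ≤ 2 * 2 ^ n := by
    rw [← pow_succ', ← Real.rpow_natCast]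
    exact Real.rpow_le_rpow_of_exponent_le one_le_two (by push_cast; linarith)
  constructor
  · calc (2 * e.factorial : ℝ)⁻¹ * 2 ^ ξ * ξ ^ e
        ≤ (2 * e.factorial : ℝ)⁻¹ * (2 * 2 ^ n) * (n + 1) ^ e := by gcongr
      _ = (n + 1 : ℝ) ^ e / e.factorial * 2 ^ n := by field_simp
      _ ≤ _ := pow_div_factorial_mul_two_pow_le_sum_range e n
  · calc _ ≤ (n + 1 : ℝ) ^ e * 2 ^ (n + 1) :=
          sum_range_card_antidiagonalTuple_nsmul_two_pow_le e n
      _ ≤ (2 * ξ) ^ e * (2 * 2 ^ ξ) := by rw [pow_succ']; gcongr; linarith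
      _ = 2 ^ (e + 1) * 2 ^ ξ * ξ ^ e := by ring
end

section
/- Let r ∈ ℕ, λ > 1, a > 0, b ∈ ℝ, and let w(x) = exp(−a|x|^λ + b) be a univariate Freud-type weight with associated measure μ on ℝ. Then the n-th optimal quadrature quantity for the unit ball of the weighted Sobolev space W^r_1(ℝ;μ) satisfies Int_n(B_{W^r_1(ℝ;μ)}) ≥ c n^{−(1−1/λ)r} for some constant c > 0 depending only on r, λ, a, b. -/
set_option maxHeartbeats 1000000


open MeasureTheory ENNReal

/-- Univariate Freud-type weight `w(x) = exp(-a|x|^λ + b)`. -/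
noncomputable def freudWeight (lam a b : ℝ) (x : ℝ) : ℝ :=
  Real.exp (-a * |x| ^ lam + b)

/-- The measure on `ℝ` with density the Freud-type weight. -/
noncomputable def freudMeasure (lam a b : ℝ) : Measure ℝ :=
  volume.withDensity fun x => ENNReal.ofReal (freudWeight lam a b x)

lemma freudWeight_pos (lam a b x : ℝ) : 0 < freudWeight lam a b x := Real.exp_pos _

lemma freudWeight_continuous {lam : ℝ} (hlam : 0 < lam) (a b : ℝ) :
    Continuous (freudWeight lam a b) := by
  have h1 : Continuous fun x : ℝ => |x| ^ lam := by
    rw [continuous_iff_continuousAt]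
    intro x
    exact (Real.continuousAt_rpow_const _ _ (Or.inr hlam.le)).comp continuous_abs.continuousAt
  exact Real.continuous_exp.comp ((continuous_const.mul h1).add continuous_const)

lemma freudMeasure_eq (lam a b : ℝ) :
    freudMeasure lam a b
      = volume.withDensity fun x => (((freudWeight lam a b x).toNNReal : NNReal) : ℝ≥0∞) :=
  rfl

lemma integral_freud {lam : ℝ} (hlam : 0 < lam) (a b : ℝ) (g : ℝ → ℝ) :
    ∫ x, g x ∂(freudMeasure lam a b) = ∫ x, g x * freudWeight lam a b x := by
  rw [freudMeasure_eq,
    integral_withDensity_eq_integral_smul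
      ((freudWeight_continuous hlam a b).measurable.real_toNNReal) g]
  congr 1; funext x
  rw [NNReal.smul_def, Real.coe_toNNReal _ (freudWeight_pos lam a b x).le, smul_eq_mul, mul_comm]

lemma integrable_freud_iff {lam : ℝ} (hlam : 0 < lam) (a b : ℝ) (g : ℝ → ℝ) :
    Integrable g (freudMeasure lam a b) ↔
      Integrable (fun x => g x * freudWeight lam a b x) volume := by
  rw [freudMeasure_eq,
    integrable_withDensity_iff_integrable_smul
      ((freudWeight_continuous hlam a b).measurable.real_toNNReal)]
  constructor <;> intro h <;> refine h.congr (Filter.Eventually.of_forall fun x => ?_) <;>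
    simp only [NNReal.smul_def, Real.coe_toNNReal _ (freudWeight_pos lam a b x).le,
      smul_eq_mul, mul_comm]

lemma integrable_freud_of_cts {lam : ℝ} (hlam : 0 < lam) (a b : ℝ) {g : ℝ → ℝ}
    (hg : Continuous g) (hsupp : HasCompactSupport g) :
    Integrable g (freudMeasure lam a b) := by
  rw [integrable_freud_iff hlam a b]
  exact (hg.mul (freudWeight_continuous hlam a b)).integrable_of_hasCompactSupport
    hsupp.mul_right

-- mean value bound for rpow
lemma rpow_sub_le {lam : ℝ} (hlam : 1 ≤ lam) {y x : ℝ} (hy : 0 ≤ y) (hyx : y ≤ x) :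
    x ^ lam - y ^ lam ≤ lam * x ^ (lam - 1) * (x - y) := by
  rcases eq_or_lt_of_le hyx with rfl | hlt
  · simp
  have hx : 0 ≤ x := hy.trans hyx
  have hcont : ContinuousOn (fun t : ℝ => t ^ lam) (Set.Icc y x) := by
    intro t ht
    exact (Real.continuousAt_rpow_const _ _ (Or.inr (by linarith))).continuousWithinAt
  have hderiv : ∀ t ∈ Set.Ioo y x, HasDerivAt (fun t : ℝ => t ^ lam)
      (lam * t ^ (lam - 1)) t := by
    intro t ht
    simpa [mul_comm] using Real.hasDerivAt_rpow_const (x := t) (p := lam) (Or.inr hlam)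
  obtain ⟨c, hc, hceq⟩ := exists_hasDerivAt_eq_slope (fun t : ℝ => t ^ lam)
    (fun t => lam * t ^ (lam - 1)) hlt hcont hderiv
  have hcx : c ^ (lam - 1) ≤ x ^ (lam - 1) := by
    apply Real.rpow_le_rpow (by linarith [hc.1]) hc.2.le (by linarith)
  have hxy : 0 < x - y := by linarith
  have heq : x ^ lam - y ^ lam = lam * c ^ (lam - 1) * (x - y) := by
    rw [hceq]; field_simp
  rw [heq]
  have hlam0 : 0 ≤ lam := by linarith
  exact mul_le_mul_of_nonneg_right (mul_le_mul_of_nonneg_left hcx hlam0) hxy.le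

lemma iteratedDeriv_fun_const_mul {n : ℕ} {f : ℝ → ℝ} (h : ContDiff ℝ n f) (c : ℝ) :
    iteratedDeriv n (fun x => c * f x) = fun x => c * iteratedDeriv n f x := by
  funext x
  have := iteratedDerivWithin_const_mul (𝕜 := ℝ) (s := Set.univ) (Set.mem_univ x)
    uniqueDiffOn_univ c h.contDiffWithinAt (n := n)
  simpa [iteratedDerivWithin_univ] using this

lemma HasCompactSupport.iteratedDeriv' {f : ℝ → ℝ} (h : HasCompactSupport f) (n : ℕ) :
    HasCompactSupport (iteratedDeriv n f) := by
  induction n with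
  | zero => simpa [iteratedDeriv_zero] using h
  | succ n ih => rw [iteratedDeriv_succ]; exact ih.deriv

lemma iteratedDeriv_affine {f : ℝ → ℝ} {m : ℕ} (h : ContDiff ℝ m f) (s c : ℝ) :
    iteratedDeriv m (fun x => f (s * (x - c)))
      = fun x => s ^ m * iteratedDeriv m f (s * (x - c)) := by
  have h1 : (fun x : ℝ => f (s * (x - c))) = fun z => (fun y => f (s * y)) (z + (-c)) := by
    funext z; ring_nf
  have h2 := iteratedDeriv_comp_add_const m (fun y => f (s * y)) (-c)
  rw [h1, h2]
  simp only [iteratedDeriv_comp_const_mul h s]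
  funext x
  ring_nf

-- bump basics
lemma bump_hcs (φ : ContDiffBump (0:ℝ)) : HasCompactSupport (⇑φ) := by
  rw [HasCompactSupport, φ.tsupport_eq]
  exact isCompact_closedBall _ _

lemma bump_deriv_bound (φ : ContDiffBump (0:ℝ)) (m : ℕ) :
    ∃ M : ℝ, 0 ≤ M ∧ ∀ y, |iteratedDeriv m (⇑φ) y| ≤ M := by
  have hc : Continuous (iteratedDeriv m (⇑φ)) :=
    (φ.contDiff (n := ⊤)).continuous_iteratedDeriv m (by exact_mod_cast le_top)
  have hcs : HasCompactSupport (fun y => |iteratedDeriv m (⇑φ) y|) :=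
    ((bump_hcs φ).iteratedDeriv' m).comp_left (g := fun t : ℝ => |t|) abs_zero
  obtain ⟨y0, hy0⟩ := hc.abs.exists_forall_ge_of_hasCompactSupport hcs
  exact ⟨|iteratedDeriv m (⇑φ) y0|, abs_nonneg _, hy0⟩

/-- Norm of the weighted Sobolev space `W^r_1(ℝ;μ)`. -/
noncomputable def uSobNorm (μ : Measure ℝ) (r : ℕ) (f : ℝ → ℝ) : ℝ :=
  ∑ s ∈ Finset.range (r + 1), ∫ x, |iteratedDeriv s f x| ∂μ

/-- Unit ball of the weighted Sobolev space `W^r_1(ℝ;μ)` (continuous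
representatives). -/
def uSobBall (μ : Measure ℝ) (r : ℕ) : Set (ℝ → ℝ) :=
  {f | ContDiff ℝ r f ∧ (∀ s ≤ r, Integrable (iteratedDeriv s f) μ) ∧
    uSobNorm μ r f ≤ 1}

lemma local_L1_bound {lam a : ℝ} (hlam : 0 < lam) (ha : 0 < a) (b : ℝ) {h : ℝ → ℝ}
    (hc : Continuous h) (hint : Integrable h (freudMeasure lam a b))
    (hI : ∫ x, |h x| ∂(freudMeasure lam a b) ≤ 1) (t : ℝ) :
    ∫ x in Set.Icc t (t + 1), |h x| ≤ Real.exp (a * (|t| + 1) ^ lam - b) := by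
  set w := freudWeight lam a b with hw
  set m := Real.exp (-a * (|t| + 1) ^ lam + b) with hm
  have hm0 : 0 < m := Real.exp_pos _
  have hmw : ∀ y ∈ Set.Icc t (t + 1), m ≤ w y := by
    intro y hy
    have hyabs : |y| ≤ |t| + 1 := by
      rw [abs_le]
      constructor
      · have := neg_abs_le t; linarith [hy.1]
      · have := le_abs_self t; linarith [hy.2]
    have : |y| ^ lam ≤ (|t| + 1) ^ lam :=
      Real.rpow_le_rpow (abs_nonneg _) hyabs hlam.le
    have ha' : -a * (|t| + 1) ^ lam + b ≤ -a * |y| ^ lam + b := by nlinarith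
    exact Real.exp_le_exp.mpr ha'
  -- transfer to weighted integral
  have hint' : Integrable (fun x => |h x| * w x) volume := by
    have h1 : Integrable (fun x => h x * w x) volume := (integrable_freud_iff hlam a b h).mp hint
    refine h1.abs.congr (Filter.Eventually.of_forall fun x => ?_)
    show |h x * w x| = |h x| * w x
    rw [abs_mul, abs_of_pos (freudWeight_pos lam a b x)]
  have key : m * ∫ x in Set.Icc t (t + 1), |h x| ≤ 1 := by
    have e1 : m * ∫ x in Set.Icc t (t + 1), |h x| = ∫ x in Set.Icc t (t + 1), m * |h x| :=
      (integral_const_mul m _).symm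
    have e2 : ∫ x in Set.Icc t (t + 1), m * |h x| ≤ ∫ x in Set.Icc t (t + 1), |h x| * w x := by
      refine setIntegral_mono_on ((continuous_const.mul hc.abs).integrableOn_Icc)
        (hint'.integrableOn) measurableSet_Icc fun x hx => ?_
      have := hmw x hx
      have := abs_nonneg (h x)
      nlinarith
    have e3 : ∫ x in Set.Icc t (t + 1), |h x| * w x ≤ ∫ x, |h x| * w x :=
      setIntegral_le_integral hint' (Filter.Eventually.of_forall fun x =>
        mul_nonneg (abs_nonneg _) (freudWeight_pos lam a b x).le)
    have e4 : ∫ x, |h x| * w x = ∫ x, |h x| ∂(freudMeasure lam a b) :=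
      (integral_freud hlam a b fun x => |h x|).symm
    linarith
  have : ∫ x in Set.Icc t (t + 1), |h x| ≤ m⁻¹ := by
    rw [← one_mul m⁻¹, ← div_eq_mul_inv]
    rw [le_div_iff₀ hm0]
    linarith [key]
  refine this.trans (le_of_eq ?_)
  rw [hm, ← Real.exp_neg]
  ring_nf

lemma uSobNorm_term_le {lam a b : ℝ} {r s : ℕ} (hs : s ≤ r) {f : ℝ → ℝ}
    (hf : uSobNorm (freudMeasure lam a b) r f ≤ 1) :
    ∫ x, |iteratedDeriv s f x| ∂(freudMeasure lam a b) ≤ 1 := by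
  refine le_trans ?_ hf
  exact Finset.single_le_sum (f := fun s => ∫ x, |iteratedDeriv s f x| ∂(freudMeasure lam a b))
    (fun i _ => integral_nonneg fun x => abs_nonneg _)
    (Finset.mem_range.mpr (Nat.lt_succ_of_le hs))

lemma ball_pointwise_bound {lam a : ℝ} (hlam : 0 < lam) (ha : 0 < a) (b : ℝ) {r : ℕ}
    (hr : 1 ≤ r) {f : ℝ → ℝ} (hf : f ∈ uSobBall (freudMeasure lam a b) r) (t : ℝ) :
    |f t| ≤ 2 * Real.exp (a * (|t| + 1) ^ lam - b) := by
  obtain ⟨hcd, hint, hnorm⟩ := hf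
  have hr' : (1 : WithTop ℕ∞) ≤ (r : WithTop ℕ∞) := by exact_mod_cast hr
  have hfc : Continuous f := hcd.continuous
  have hfc' : Continuous (deriv f) := hcd.continuous_deriv hr'
  have hintf : Integrable f (freudMeasure lam a b) := by
    have := hint 0 (Nat.zero_le r); rwa [iteratedDeriv_zero] at this
  have hintf' : Integrable (deriv f) (freudMeasure lam a b) := by
    have := hint 1 hr; rwa [iteratedDeriv_one] at this
  have hIf : ∫ x, |f x| ∂(freudMeasure lam a b) ≤ 1 := by
    have := uSobNorm_term_le (Nat.zero_le r) hnorm; rwa [iteratedDeriv_zero] at this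
  have hIf' : ∫ x, |deriv f x| ∂(freudMeasure lam a b) ≤ 1 := by
    have := uSobNorm_term_le hr hnorm; rwa [iteratedDeriv_one] at this
  set B := Real.exp (a * (|t| + 1) ^ lam - b) with hB
  have hB1 : ∫ x in Set.Icc t (t + 1), |f x| ≤ B := local_L1_bound hlam ha b hfc hintf hIf t
  have hB2 : ∫ x in Set.Icc t (t + 1), |deriv f x| ≤ B :=
    local_L1_bound hlam ha b hfc' hintf' hIf' t
  -- minimum point
  obtain ⟨y, hy, hymin⟩ := isCompact_Icc.exists_isMinOn (Set.nonempty_Icc.mpr (by linarith))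
    (hfc.abs.continuousOn (s := Set.Icc t (t + 1)))
  have hfy : |f y| ≤ ∫ x in Set.Icc t (t + 1), |f x| := by
    have : ∫ _x in Set.Icc t (t + 1), |f y| ≤ ∫ x in Set.Icc t (t + 1), |f x| := by
      refine setIntegral_mono_on ((integrableOn_const_iff (by finiteness)).mpr ?_) hfc.abs.integrableOn_Icc
        measurableSet_Icc fun x hx => hymin hx
      right; rw [Real.volume_Icc]; exact ENNReal.ofReal_lt_top
    rwa [setIntegral_const, measureReal_def, Real.volume_Icc, show t + 1 - t = 1 by ring, ENNReal.ofReal_one,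
      ENNReal.toReal_one, one_smul] at this
  -- FTC
  have hftc : ∫ u in t..y, deriv f u = f y - f t := by
    refine intervalIntegral.integral_deriv_eq_sub (fun x _ => (hcd.differentiable (ne_of_gt (zero_lt_one.trans_le hr'))).differentiableAt) ?_
    exact hfc'.intervalIntegrable t y
  have habs : |∫ u in t..y, deriv f u| ≤ ∫ x in Set.Icc t (t + 1), |deriv f x| := by
    refine (intervalIntegral.abs_integral_le_integral_abs hy.1).trans ?_
    rw [intervalIntegral.integral_of_le hy.1]
    refine setIntegral_mono_set hfc'.abs.integrableOn_Icc
      (Filter.Eventually.of_forall fun x => abs_nonneg _) ?_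
    exact Filter.Eventually.of_forall fun x hx => ⟨le_of_lt hx.1, hx.2.trans hy.2⟩
  have : |f t| ≤ |f y| + |∫ u in t..y, deriv f u| := by
    rw [hftc]
    have := abs_sub_abs_le_abs_sub (f t) (f y)
    have h2 : |f t - f y| = |f y - f t| := abs_sub_comm _ _
    calc |f t| ≤ |f y| + |f t - f y| := by linarith [abs_sub_abs_le_abs_sub (f t) (f y)]
    _ = |f y| + |f y - f t| := by rw [h2]
  linarith

lemma support_iteratedDeriv_subset (f : ℝ → ℝ) (n : ℕ) :
    Function.support (iteratedDeriv n f) ⊆ tsupport f := by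
  induction n with
  | zero => rw [iteratedDeriv_zero]; exact subset_tsupport f
  | succ n ih =>
    rw [iteratedDeriv_succ]
    exact support_deriv_subset.trans (closure_minimal ih isClosed_closure)

lemma exists_bad_function {r : ℕ} (hr : 1 ≤ r) {lam a : ℝ} (hlam : 1 < lam) (ha : 0 < a)
    (b : ℝ) :
    ∃ c : ℝ, 0 < c ∧ ∀ n : ℕ, 1 ≤ n → ∀ k : ℕ, k ≤ n → ∀ xs : Fin k → ℝ,
      ∃ f ∈ uSobBall (freudMeasure lam a b) r,
        (∀ i, f (xs i) = 0) ∧ (∀ x, 0 ≤ f x) ∧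
        c * (n : ℝ) ^ (-(1 - 1 / lam) * (r : ℝ)) ≤ ∫ x, f x ∂(freudMeasure lam a b) := by
  classical
  have hlam0 : 0 < lam := lt_trans one_pos hlam
  set μ := freudMeasure lam a b with hμ
  set w := freudWeight lam a b with hwdef
  set φ : ContDiffBump (0:ℝ) := ⟨1, 2, one_pos, one_lt_two⟩ with hφ
  choose M hM0 hMb using bump_deriv_bound φ
  set C1 : ℝ := ∑ m ∈ Finset.range (r + 1), 4 ^ m * M m with hC1
  have hM01 : 1 ≤ M 0 := by
    have h1 : (⇑φ) 0 = 1 := φ.one_of_mem_closedBall (by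
      simp only [Metric.mem_closedBall, dist_self, hφ]; norm_num)
    have := hMb 0 0
    rw [iteratedDeriv_zero] at this
    rw [h1] at this
    simpa using this
  have hC1pos : 0 < C1 := by
    have : (1:ℝ) ≤ ∑ m ∈ Finset.range (r + 1), 4 ^ m * M m := by
      calc (1:ℝ) = 4 ^ 0 * 1 := by norm_num
      _ ≤ 4 ^ 0 * M 0 := by nlinarith
      _ ≤ ∑ m ∈ Finset.range (r + 1), 4 ^ m * M m :=
          Finset.single_le_sum (f := fun m => (4:ℝ) ^ m * M m)
            (fun i _ => mul_nonneg (by positivity) (hM0 i)) (Finset.mem_range.mpr (Nat.succ_pos r))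
    linarith
  set K : ℝ := Real.exp (a * (lam * 3 ^ (lam - 1))) with hK
  have hexp0 : (0:ℝ) ≤ a * (lam * 3 ^ (lam - 1)) := by positivity
  have hK1 : 1 ≤ K := by rw [hK]; exact Real.one_le_exp hexp0
  have hKpos : 0 < K := lt_of_lt_of_le one_pos hK1
  refine ⟨1 / (2 * K ^ 2 * C1), by positivity, ?_⟩
  intro n hn k hk xs
  have hnpos : (0:ℝ) < n := by exact_mod_cast hn
  set δ : ℝ := (n : ℝ) ^ (1 / lam - 1) with hδ
  have hδ0 : 0 < δ := Real.rpow_pos_of_pos hnpos _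
  have hδ1 : δ ≤ 1 := by
    apply Real.rpow_le_one_of_one_le_of_nonpos (by exact_mod_cast hn)
    have : 1 / lam < 1 := by
      rw [div_lt_one hlam0]; exact hlam
    linarith
  clear_value δ
  -- pigeonhole: a node-free interval
  have hpigeon : ∃ j : ℕ, j ≤ n ∧ ∀ i, xs i ∉ Set.Ioo (2 * j * δ) (2 * j * δ + δ) := by
    by_contra hcon
    push_neg at hcon
    have hsel : ∀ j : Fin (n + 1), ∃ i, xs i ∈
        Set.Ioo (2 * (j:ℕ) * δ) (2 * (j:ℕ) * δ + δ) := fun j =>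
      hcon (j:ℕ) (Nat.lt_succ_iff.mp j.isLt)
    choose F hF using hsel
    have key : ∀ j1 j2 : Fin (n + 1), (j1:ℕ) < (j2:ℕ) → F j1 = F j2 → False := by
      intro j1 j2 hlt hFeq
      have h1 := hF j1
      have h2 := hF j2
      rw [hFeq] at h1
      have hord : 2 * ((j1:ℕ):ℝ) * δ + δ ≤ 2 * ((j2:ℕ):ℝ) * δ := by
        have hle : (j1:ℕ) + 1 ≤ (j2:ℕ) := hlt
        have h2le : ((j1:ℕ):ℝ) + 1 ≤ ((j2:ℕ):ℝ) := by exact_mod_cast hle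
        nlinarith
      linarith [h1.2, h2.1]
    have hinj : Function.Injective F := by
      intro j1 j2 hFeq
      by_contra hne
      have hne' : (j1:ℕ) ≠ (j2:ℕ) := fun hcc => hne (Fin.ext hcc)
      rcases hne'.lt_or_gt with hlt | hlt
      · exact key j1 j2 hlt hFeq
      · exact key j2 j1 hlt hFeq.symm
    have := Fintype.card_le_of_injective F hinj
    simp only [Fintype.card_fin] at this
    omega
  obtain ⟨j, hjn, hj⟩ := hpigeon
  set p : ℝ := 2 * j * δ with hp
  have hp0 : 0 ≤ p := by positivity
  set c0 : ℝ := p + δ / 2 with hc0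
  set s0 : ℝ := δ / 4 with hs0
  have hs0pos : 0 < s0 := by positivity
  clear_value p c0 s0
  set g : ℝ → ℝ := fun x => (⇑φ) (s0⁻¹ * (x - c0)) with hg
  -- basic properties of g
  have gnn : ∀ x, 0 ≤ g x := fun x => φ.nonneg
  have gzero : ∀ x, x ∉ Set.Ioo p (p + δ) → g x = 0 := by
    intro x hx
    apply φ.zero_of_le_dist
    rw [Real.dist_eq, sub_zero, abs_mul, abs_of_pos (inv_pos.mpr hs0pos)]
    have hxd : δ / 2 ≤ |x - c0| := by
      rcases not_and_or.mp (fun hc => hx ⟨hc.1, hc.2⟩) with h | h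
      · push_neg at h
        rw [abs_sub_comm, abs_of_nonneg (by simp only [hc0]; linarith)]
        simp only [hc0]; linarith
      · push_neg at h
        rw [abs_of_nonneg (by simp only [hc0]; linarith)]
        simp only [hc0]; linarith
    show (2:ℝ) ≤ _
    rw [hs0, inv_div, div_mul_eq_mul_div, le_div_iff₀ hδ0]
    linarith
  have gzeroIcc : ∀ x, x ∉ Set.Icc (c0 - δ/2) (c0 + δ/2) → g x = 0 := by
    intro x hx
    apply gzero
    intro hmem
    refine hx ⟨?_, ?_⟩
    · simp only [hc0]; linarith [hmem.1]
    · simp only [hc0]; linarith [hmem.2]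
  have gone : ∀ x ∈ Set.Icc (c0 - s0) (c0 + s0), g x = 1 := by
    intro x hx
    apply φ.one_of_mem_closedBall
    rw [Metric.mem_closedBall, Real.dist_eq, sub_zero, abs_mul,
      abs_of_pos (inv_pos.mpr hs0pos)]
    have : |x - c0| ≤ s0 := by
      rw [abs_le]; constructor <;> [linarith [hx.1]; linarith [hx.2]]
    show _ ≤ (1:ℝ)
    calc s0⁻¹ * |x - c0| ≤ s0⁻¹ * s0 := by
          exact mul_le_mul_of_nonneg_left this (inv_pos.mpr hs0pos).le
    _ = 1 := inv_mul_cancel₀ hs0pos.ne'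
  -- smoothness of g
  have haff : ContDiff ℝ (⊤ : ℕ∞) (fun x : ℝ => s0⁻¹ * (x - c0)) :=
    contDiff_const.mul (contDiff_id.sub contDiff_const)
  have gcd : ContDiff ℝ (⊤ : ℕ∞) g := φ.contDiff.comp haff
  -- iterated derivative formula
  have hder : ∀ m : ℕ, iteratedDeriv m g
      = fun x => s0⁻¹ ^ m * iteratedDeriv m (⇑φ) (s0⁻¹ * (x - c0)) := by
    intro m
    exact iteratedDeriv_affine (φ.contDiff.of_le (by exact_mod_cast le_top)) s0⁻¹ c0
  -- vanishing of derivatives of φ outside ball 2, hence of iteratedDeriv m g outside Icc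
  have hφz : ∀ m : ℕ, ∀ y : ℝ, 2 < |y| → iteratedDeriv m (⇑φ) y = 0 := by
    intro m y hy
    by_contra hne
    have hmem : y ∈ tsupport (⇑φ) := support_iteratedDeriv_subset (⇑φ) m hne
    rw [φ.tsupport_eq, Metric.mem_closedBall, Real.dist_eq, sub_zero] at hmem
    have hro : φ.rOut = 2 := rfl
    rw [hro] at hmem
    linarith
  have hdz : ∀ m : ℕ, ∀ x, x ∉ Set.Icc (c0 - δ/2) (c0 + δ/2) → iteratedDeriv m g x = 0 := by
    intro m x hx
    rw [hder m]
    have hxd : δ / 2 < |x - c0| := by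
      rcases not_and_or.mp (fun hc => hx ⟨hc.1, hc.2⟩) with h | h
      · push_neg at h
        rw [abs_sub_comm, abs_of_pos (by linarith)]
        linarith
      · push_neg at h
        rw [abs_of_pos (by linarith)]
        linarith
    have h2 : 2 < |s0⁻¹ * (x - c0)| := by
      rw [abs_mul, abs_of_pos (inv_pos.mpr hs0pos), hs0, inv_div, div_mul_eq_mul_div,
        lt_div_iff₀ hδ0]
      linarith
    show s0⁻¹ ^ m * iteratedDeriv m (⇑φ) (s0⁻¹ * (x - c0)) = 0
    rw [hφz m _ h2, mul_zero]
  have hcont : ∀ m : ℕ, Continuous (iteratedDeriv m g) := by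
    intro m
    rw [hder m]
    exact continuous_const.mul
      (((φ.contDiff (n := ⊤)).continuous_iteratedDeriv m (by exact_mod_cast le_top)).comp
        (continuous_const.mul (continuous_id.sub continuous_const)))
  have hcs : ∀ m : ℕ, HasCompactSupport (iteratedDeriv m g) := fun m =>
    HasCompactSupport.intro isCompact_Icc (hdz m)
  have hint : ∀ m : ℕ, Integrable (iteratedDeriv m g) μ := fun m =>
    integrable_freud_of_cts hlam0 a b (hcont m) (hcs m)
  -- weight comparison on the interval
  have hwcomp : ∀ u ∈ Set.Icc (c0 - δ/2) (c0 + δ/2), ∀ v ∈ Set.Icc (c0 - δ/2) (c0 + δ/2),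
      w u ≤ K * w v := by
    intro u hu v hv
    have hc0' : c0 - δ / 2 = p := by rw [hc0]; ring
    have hc0'' : c0 + δ / 2 = p + δ := by rw [hc0]; ring
    rw [hc0', hc0''] at hu hv
    -- bound the right endpoint
    have hq3 : p + δ ≤ 3 * (n:ℝ) ^ (1 / lam) := by
      have hnd : (n:ℝ) * δ = (n:ℝ) ^ (1 / lam) := by
        have hone : (n:ℝ) = (n:ℝ) ^ (1:ℝ) := (Real.rpow_one _).symm
        rw [hδ]
        nth_rewrite 1 [hone]
        rw [← Real.rpow_add hnpos]
        norm_num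
      have hj3 : 2 * (j:ℝ) * δ + δ ≤ 3 * ((n:ℝ) * δ) := by
        have hjr : (j:ℝ) ≤ (n:ℝ) := by exact_mod_cast hjn
        have h1 : (j:ℝ) * δ ≤ (n:ℝ) * δ := mul_le_mul_of_nonneg_right hjr hδ0.le
        have h2 : δ ≤ (n:ℝ) * δ := by
          have : (1:ℝ) ≤ (n:ℝ) := by exact_mod_cast hn
          nlinarith
        linarith
      rw [hp]
      calc 2 * (j:ℝ) * δ + δ ≤ 3 * ((n:ℝ) * δ) := hj3
      _ = 3 * (n:ℝ) ^ (1 / lam) := by rw [hnd]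
    have hgap : (p + δ) ^ lam - p ^ lam ≤ lam * 3 ^ (lam - 1) := by
      have h1 : (p + δ) ^ lam - p ^ lam ≤ lam * (p + δ) ^ (lam - 1) * δ := by
        have := rpow_sub_le hlam.le hp0 (by linarith : p ≤ p + δ)
        rw [show p + δ - p = δ by ring] at this
        exact this
      have h2 : (p + δ) ^ (lam - 1) ≤ (3 * (n:ℝ) ^ (1 / lam)) ^ (lam - 1) :=
        Real.rpow_le_rpow (by linarith) hq3 (by linarith)
      have h3 : (3 * (n:ℝ) ^ (1 / lam)) ^ (lam - 1) * δ = 3 ^ (lam - 1) := by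
        rw [Real.mul_rpow (by norm_num) (Real.rpow_nonneg hnpos.le _), hδ,
          ← Real.rpow_mul hnpos.le, mul_assoc, ← Real.rpow_add hnpos]
        have hexp : 1 / lam * (lam - 1) + (1 / lam - 1) = 0 := by
          field_simp
          ring
        rw [hexp, Real.rpow_zero, mul_one]
      calc (p + δ) ^ lam - p ^ lam ≤ lam * (p + δ) ^ (lam - 1) * δ := h1
      _ ≤ lam * (3 * (n:ℝ) ^ (1 / lam)) ^ (lam - 1) * δ := by
          have := mul_le_mul_of_nonneg_left h2 hlam0.le
          nlinarith [hδ0]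
      _ = lam * 3 ^ (lam - 1) := by rw [mul_assoc, h3]
    -- compare
    have hu0 : 0 ≤ u := le_trans hp0 hu.1
    have hv0 : 0 ≤ v := le_trans hp0 hv.1
    have hulam : p ^ lam ≤ u ^ lam := Real.rpow_le_rpow hp0 hu.1 hlam0.le
    have hvlam : v ^ lam ≤ (p + δ) ^ lam := Real.rpow_le_rpow hv0 hv.2 hlam0.le
    show freudWeight lam a b u ≤ K * freudWeight lam a b v
    rw [freudWeight, freudWeight, hK, ← Real.exp_add, abs_of_nonneg hu0, abs_of_nonneg hv0]
    apply Real.exp_le_exp.mpr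
    have : v ^ lam - u ^ lam ≤ lam * 3 ^ (lam - 1) := by linarith
    nlinarith
  -- weight at center
  set W : ℝ := w c0 with hW
  have hW0 : 0 < W := freudWeight_pos lam a b c0
  have hc0mem : c0 ∈ Set.Icc (c0 - δ / 2) (c0 + δ / 2) := by
    constructor <;> linarith
  have hwcont : Continuous w := freudWeight_continuous hlam0 a b
  -- generic integral upper bound
  have intbound : ∀ h : ℝ → ℝ, Continuous h →
      (∀ x ∉ Set.Icc (c0 - δ / 2) (c0 + δ / 2), h x = 0) →
      ∀ B : ℝ, 0 ≤ B → (∀ x, |h x| ≤ B) →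
      ∫ x, |h x| ∂μ ≤ B * ((K * W) * δ) := by
    intro h hc hz B hB0 hBb
    rw [hμ, integral_freud hlam0 a b]
    have hzz : ∀ x ∉ Set.Icc (c0 - δ / 2) (c0 + δ / 2), |h x| * w x = 0 := fun x hx => by
      rw [hz x hx, abs_zero, zero_mul]
    rw [← setIntegral_eq_integral_of_forall_compl_eq_zero hzz]
    have hle : ∫ x in Set.Icc (c0 - δ / 2) (c0 + δ / 2), |h x| * w x
        ≤ ∫ _x in Set.Icc (c0 - δ / 2) (c0 + δ / 2), B * (K * W) := by
      refine setIntegral_mono_on ((hc.abs.mul hwcont).integrableOn_Icc)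
        ((integrableOn_const_iff (by finiteness)).mpr (Or.inr (by rw [Real.volume_Icc]; exact ENNReal.ofReal_lt_top)))
        measurableSet_Icc fun x hx => ?_
      have hw1 : w x ≤ K * W := hwcomp x hx c0 hc0mem
      have hwp : 0 < w x := freudWeight_pos lam a b x
      have := hBb x
      have habs : 0 ≤ |h x| := abs_nonneg _
      nlinarith
    refine hle.trans (le_of_eq ?_)
    rw [setIntegral_const, measureReal_def, Real.volume_Icc, smul_eq_mul]
    rw [show c0 + δ / 2 - (c0 - δ / 2) = δ by ring, ENNReal.toReal_ofReal hδ0.le]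
    ring
  -- upper bound for the Sobolev norm of g
  set N : ℝ := uSobNorm μ r g with hN
  have hNle : N ≤ ((K * W) * δ) * (δ⁻¹ ^ r * C1) := by
    rw [hN, uSobNorm]
    have hterm : ∀ m ∈ Finset.range (r + 1),
        ∫ x, |iteratedDeriv m g x| ∂μ ≤ (4 ^ m * M m * δ⁻¹ ^ r) * ((K * W) * δ) := by
      intro m hm
      have hmr : m ≤ r := Nat.lt_succ_iff.mp (Finset.mem_range.mp hm)
      have hbb : ∀ x, |iteratedDeriv m g x| ≤ s0⁻¹ ^ m * M m := by
        intro x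
        rw [hder m]
        show |s0⁻¹ ^ m * iteratedDeriv m (⇑φ) (s0⁻¹ * (x - c0))| ≤ _
        rw [abs_mul, abs_of_nonneg (by positivity : (0:ℝ) ≤ s0⁻¹ ^ m)]
        exact mul_le_mul_of_nonneg_left (hMb m _) (by positivity)
      have h1 : ∫ x, |iteratedDeriv m g x| ∂μ ≤ (s0⁻¹ ^ m * M m) * ((K * W) * δ) :=
        intbound _ (hcont m) (hdz m) _ (mul_nonneg (by positivity) (hM0 m)) hbb
      refine h1.trans ?_
      have hs0inv : s0⁻¹ ^ m = 4 ^ m * δ⁻¹ ^ m := by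
        rw [hs0, inv_div, div_pow, div_eq_mul_inv, inv_pow]
      have hδinv : δ⁻¹ ^ m ≤ δ⁻¹ ^ r := by
        apply pow_le_pow_right₀ (one_le_inv_iff₀.mpr ⟨hδ0, hδ1⟩) hmr
      have : s0⁻¹ ^ m * M m ≤ 4 ^ m * M m * δ⁻¹ ^ r := by
        rw [hs0inv]
        have h4 : (0:ℝ) ≤ 4 ^ m := by positivity
        calc 4 ^ m * δ⁻¹ ^ m * M m ≤ 4 ^ m * δ⁻¹ ^ r * M m :=
              mul_le_mul_of_nonneg_right (mul_le_mul_of_nonneg_left hδinv h4) (hM0 m)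
        _ = 4 ^ m * M m * δ⁻¹ ^ r := by ring
      nlinarith [hW0, hKpos, hδ0, mul_pos (mul_pos hKpos hW0) hδ0]
    calc ∑ m ∈ Finset.range (r + 1), ∫ x, |iteratedDeriv m g x| ∂μ
        ≤ ∑ m ∈ Finset.range (r + 1), (4 ^ m * M m * δ⁻¹ ^ r) * ((K * W) * δ) :=
          Finset.sum_le_sum hterm
    _ = (∑ m ∈ Finset.range (r + 1), 4 ^ m * M m) * (δ⁻¹ ^ r * ((K * W) * δ)) := by
        rw [Finset.sum_mul]
        exact Finset.sum_congr rfl fun m _ => by ring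
    _ = ((K * W) * δ) * (δ⁻¹ ^ r * C1) := by rw [hC1]; ring
  -- lower bound for the integral of g
  have hgint : Integrable g μ := by
    have := hint 0; rwa [iteratedDeriv_zero] at this
  have hgw_int : Integrable (fun x => g x * w x) volume :=
    (integrable_freud_iff hlam0 a b g).mp hgint
  have hLlow : (K⁻¹ * W) * (δ / 2) ≤ ∫ x, g x ∂μ := by
    rw [hμ, integral_freud hlam0 a b]
    have hsub : Set.Icc (c0 - s0) (c0 + s0) ⊆ Set.Icc (c0 - δ / 2) (c0 + δ / 2) := by
      intro x hx
      constructor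
      · have := hx.1; rw [hs0] at this; linarith
      · have := hx.2; rw [hs0] at this; linarith
    have h1 : ∫ x in Set.Icc (c0 - s0) (c0 + s0), g x * w x ≤ ∫ x, g x * w x :=
      setIntegral_le_integral hgw_int (Filter.Eventually.of_forall fun x =>
        mul_nonneg (gnn x) (freudWeight_pos lam a b x).le)
    have h2 : ∫ _x in Set.Icc (c0 - s0) (c0 + s0), K⁻¹ * W
        ≤ ∫ x in Set.Icc (c0 - s0) (c0 + s0), g x * w x := by
      refine setIntegral_mono_on
        ((integrableOn_const_iff (by finiteness)).mpr (Or.inr (by rw [Real.volume_Icc]; exact ENNReal.ofReal_lt_top)))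
        ((gcd.continuous.mul hwcont).integrableOn_Icc) measurableSet_Icc fun x hx => ?_
      rw [gone x hx, one_mul]
      have hWK : W ≤ K * w x := hwcomp c0 hc0mem x (hsub hx)
      rw [inv_mul_le_iff₀ hKpos]
      exact hWK
    have h3 : ∫ _x in Set.Icc (c0 - s0) (c0 + s0), K⁻¹ * W = (K⁻¹ * W) * (δ / 2) := by
      rw [setIntegral_const, measureReal_def, Real.volume_Icc, smul_eq_mul,
        show c0 + s0 - (c0 - s0) = δ / 2 by rw [hs0]; ring, ENNReal.toReal_ofReal (by linarith)]
      ring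
    linarith
  -- positivity of the norm
  have habsg : ∀ x, |g x| = g x := fun x => abs_of_nonneg (gnn x)
  have hNg0 : ∫ x, |g x| ∂μ = ∫ x, g x ∂μ := by
    congr 1; funext x; exact habsg x
  have hN_ge : (K⁻¹ * W) * (δ / 2) ≤ N := by
    have h0 : ∫ x, |iteratedDeriv 0 g x| ∂μ ≤ N := by
      rw [hN, uSobNorm]
      exact Finset.single_le_sum (f := fun s => ∫ x, |iteratedDeriv s g x| ∂μ)
        (fun i _ => integral_nonneg fun x => abs_nonneg _)
        (Finset.mem_range.mpr (Nat.succ_pos r))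
    rw [iteratedDeriv_zero, hNg0] at h0
    linarith
  have hNpos : 0 < N := lt_of_lt_of_le (by positivity) hN_ge
  -- the normalized function
  set f : ℝ → ℝ := fun x => N⁻¹ * g x with hf
  have hgcd_r : ∀ m : ℕ, ContDiff ℝ m g := fun m => gcd.of_le (by exact_mod_cast le_top)
  have hfder : ∀ m : ℕ, iteratedDeriv m f = fun x => N⁻¹ * iteratedDeriv m g x := fun m =>
    iteratedDeriv_fun_const_mul (hgcd_r m) N⁻¹
  have hfint_norm : ∀ m : ℕ, ∫ x, |iteratedDeriv m f x| ∂μ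
      = N⁻¹ * ∫ x, |iteratedDeriv m g x| ∂μ := by
    intro m
    rw [hfder m]
    simp only [abs_mul, abs_of_nonneg (inv_nonneg.mpr hNpos.le)]
    exact integral_const_mul N⁻¹ _
  have hfnorm : uSobNorm μ r f = 1 := by
    rw [uSobNorm]
    have : ∀ m ∈ Finset.range (r + 1), ∫ x, |iteratedDeriv m f x| ∂μ
        = N⁻¹ * ∫ x, |iteratedDeriv m g x| ∂μ := fun m _ => hfint_norm m
    rw [Finset.sum_congr rfl this, ← Finset.mul_sum]
    rw [show ∑ s ∈ Finset.range (r + 1), ∫ x, |iteratedDeriv s g x| ∂μ = N from (hN ▸ rfl)]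
    exact inv_mul_cancel₀ hNpos.ne'
  have hfmem : f ∈ uSobBall μ r := by
    refine ⟨contDiff_const.mul (hgcd_r r), fun s _ => ?_, le_of_eq hfnorm⟩
    rw [hfder s]
    exact (hint s).const_mul N⁻¹
  refine ⟨f, hfmem, fun i => ?_, fun x => mul_nonneg (inv_nonneg.mpr hNpos.le) (gnn x), ?_⟩
  · show N⁻¹ * g (xs i) = 0
    rw [gzero (xs i) (hj i), mul_zero]
  -- final computation
  have hfint : ∫ x, f x ∂μ = N⁻¹ * ∫ x, g x ∂μ := integral_const_mul N⁻¹ g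
  have hδr : (n:ℝ) ^ (-(1 - 1 / lam) * (r:ℝ)) = δ ^ r := by
    rw [hδ, show -(1 - 1 / lam) * (r:ℝ) = (1 / lam - 1) * (r:ℝ) by ring,
      Real.rpow_mul hnpos.le, Real.rpow_natCast]
  rw [hfint, hδr]
  have hLB0 : 0 < (K⁻¹ * W) * (δ / 2) := by positivity
  have hNB : N ≤ ((K * W) * δ) * (δ⁻¹ ^ r * C1) := hNle
  have hdiv : ((K⁻¹ * W) * (δ / 2)) / (((K * W) * δ) * (δ⁻¹ ^ r * C1))
      ≤ (∫ x, g x ∂μ) / N := by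
    apply div_le_div₀ (le_trans hLB0.le hLlow) hLlow hNpos hNB
  have heq : ((K⁻¹ * W) * (δ / 2)) / (((K * W) * δ) * (δ⁻¹ ^ r * C1))
      = 1 / (2 * K ^ 2 * C1) * δ ^ r := by
    rw [inv_pow]
    field_simp
  rw [heq] at hdiv
  calc 1 / (2 * K ^ 2 * C1) * δ ^ r ≤ (∫ x, g x ∂μ) / N := hdiv
  _ = N⁻¹ * ∫ x, g x ∂μ := by rw [div_eq_mul_inv, mul_comm]

/-- The quantity of optimal quadrature with at most `n` nodes. -/
noncomputable def IntQuad {D : Type*} [MeasurableSpace D] (μ : Measure D)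
    (W : Set (D → ℝ)) (n : ℕ) : ℝ :=
  ⨅ k : Fin (n + 1), ⨅ x : Fin (k : ℕ) → D, ⨅ lam : Fin (k : ℕ) → ℝ,
    ⨆ f : W, |(∫ y, (f : D → ℝ) y ∂μ) - ∑ i, lam i * (f : D → ℝ) (x i)|

/-- for `r ∈ ℕ`, `λ > 1`, `a > 0`, `b ∈ ℝ`, the optimal quadrature
quantity for the unit ball of `W^r_1(ℝ;μ)` with Freud weight satisfies
`Int_n ≥ c n^{-(1-1/λ)r}` for some `c > 0`. -/
theorem IntQuad_lower_bound_univariate (r : ℕ) (hr : 1 ≤ r) (lam a b : ℝ)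
    (hlam : 1 < lam) (ha : 0 < a) :
    ∃ c : ℝ, 0 < c ∧ ∀ n : ℕ, 1 ≤ n →
      c * (n : ℝ) ^ (-(1 - 1 / lam) * (r : ℝ)) ≤
        IntQuad (freudMeasure lam a b) (uSobBall (freudMeasure lam a b) r) n := by
  have hlam0 : 0 < lam := lt_trans one_pos hlam
  obtain ⟨c, hc, hmain⟩ := exists_bad_function hr hlam ha b
  set μ := freudMeasure lam a b with hμ
  refine ⟨c, hc, ?_⟩
  intro n hn
  rw [IntQuad]
  refine le_ciInf fun k => le_ciInf fun x => le_ciInf fun lw => ?_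
  obtain ⟨f, hfmem, hfzero, hfnn, hflow⟩ := hmain n hn k (Nat.lt_succ_iff.mp k.isLt) x
  have hbdd : BddAbove (Set.range fun f : uSobBall μ r =>
      |(∫ y, (f : ℝ → ℝ) y ∂μ) - ∑ i, lw i * (f : ℝ → ℝ) (x i)|) := by
    refine ⟨1 + ∑ i, |lw i| * (2 * Real.exp (a * (|x i| + 1) ^ lam - b)), ?_⟩
    rintro v ⟨⟨h, hmem⟩, rfl⟩
    have h1 : |∫ y, h y ∂μ| ≤ 1 := by
      have hna := norm_integral_le_integral_norm (μ := μ) h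
      simp only [Real.norm_eq_abs] at hna
      refine hna.trans ?_
      have := uSobNorm_term_le (Nat.zero_le r) hmem.2.2
      rwa [iteratedDeriv_zero] at this
    have h2 : |∑ i, lw i * h (x i)| ≤
        ∑ i, |lw i| * (2 * Real.exp (a * (|x i| + 1) ^ lam - b)) := by
      refine le_trans (Finset.abs_sum_le_sum_abs _ _) (Finset.sum_le_sum fun i _ => ?_)
      rw [abs_mul]
      exact mul_le_mul_of_nonneg_left
        (ball_pointwise_bound hlam0 ha b hr hmem (x i)) (abs_nonneg _)
    calc |(∫ y, h y ∂μ) - ∑ i, lw i * h (x i)|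
        ≤ |∫ y, h y ∂μ| + |∑ i, lw i * h (x i)| := abs_sub _ _
    _ ≤ 1 + ∑ i, |lw i| * (2 * Real.exp (a * (|x i| + 1) ^ lam - b)) := add_le_add h1 h2
  refine le_trans ?_ (le_ciSup hbdd ⟨f, hfmem⟩)
  have hsum : ∑ i, lw i * f (x i) = 0 :=
    Finset.sum_eq_zero fun i _ => by rw [hfzero i, mul_zero]
  show c * (n : ℝ) ^ (-(1 - 1 / lam) * (r : ℝ)) ≤ |(∫ y, f y ∂μ) - ∑ i, lw i * f (x i)|
  rw [hsum, sub_zero, abs_of_nonneg (integral_nonneg hfnn)]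
  exact hflow
end
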